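/- Let X ⊂ ℂ² and Y ⊂ ℂ² be algebraic curves, let p be a node of X and q a node of Y. Then the germs (X, p) and (Y, q) are bi-Lipschitz equivalent. -/

import Mathlib

open Set Metric

noncomputable section

/-- An algebraic set in ℂᵏ: the common zero set of a finite family of polynomials. -/
def IsAlgebraicSet {k : ℕ} (X : Set (EuclideanSpace ℂ (Fin k))) : Prop :=
  ∃ S : Finset (MvPolynomial (Fin k) ℂ),
    X = {x | ∀ p ∈ S, MvPolynomial.eval (fun i => x i) p = 0}

/-- An irreducible algebraic curve: an infinite algebraic set all of whose proper algebraic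
subsets are finite. -/
def IsIrreducibleAlgebraicCurve {k : ℕ} (X : Set (EuclideanSpace ℂ (Fin k))) : Prop :=
  IsAlgebraicSet X ∧ X.Infinite ∧ ∀ Y, IsAlgebraicSet Y → Y ⊂ X → Y.Finite

/-- An algebraic curve: a finite union of irreducible algebraic curves. -/
def IsAlgebraicCurve {k : ℕ} (X : Set (EuclideanSpace ℂ (Fin k))) : Prop :=
  ∃ F : Finset (Set (EuclideanSpace ℂ (Fin k))),
    (∀ C ∈ F, IsIrreducibleAlgebraicCurve C) ∧ X = ⋃ C ∈ F, C

/-- `f` maps `X` bijectively onto `Y` and is bi-Lipschitz (outer metric). -/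
def IsBiLipschitzOn {E F : Type*} [NormedAddCommGroup E] [NormedAddCommGroup F]
    (f : E → F) (X : Set E) (Y : Set F) : Prop :=
  Set.BijOn f X Y ∧ ∃ C : ℝ, 1 ≤ C ∧ ∀ x ∈ X, ∀ x' ∈ X,
    C⁻¹ * ‖x - x'‖ ≤ ‖f x - f x'‖ ∧ ‖f x - f x'‖ ≤ C * ‖x - x'‖

/-- `X` and `Y` are bi-Lipschitz equivalent (with respect to the outer Euclidean metric). -/
def BiLipschitzEquiv {E F : Type*} [NormedAddCommGroup E] [NormedAddCommGroup F]
    (X : Set E) (Y : Set F) : Prop :=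
  ∃ f : E → F, IsBiLipschitzOn f X Y

/-- `X` and `Y` are bi-Lipschitz equivalent at infinity. -/
def BiLipschitzEquivAtInfinity {E F : Type*} [NormedAddCommGroup E] [NormedAddCommGroup F]
    (X : Set E) (Y : Set F) : Prop :=
  ∃ (K₁ : Set E) (K₂ : Set F), IsCompact K₁ ∧ IsCompact K₂ ∧
    BiLipschitzEquiv (X \ K₁) (Y \ K₂)

/-- The germs `(X, p)` and `(Y, q)` are bi-Lipschitz equivalent. -/
def GermBiLipschitzEquiv {E F : Type*} [NormedAddCommGroup E] [NormedAddCommGroup F]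
    (X : Set E) (p : E) (Y : Set F) (q : F) : Prop :=
  ∃ (U : Set E) (V : Set F), IsOpen U ∧ IsOpen V ∧ p ∈ U ∧ q ∈ V ∧
    ∃ f : E → F, IsBiLipschitzOn f (X ∩ U) (Y ∩ V) ∧ f p = q

/-- `γ` maps `D` homeomorphically onto `S`. -/
def MapsHomeomorphicallyOnto {E : Type*} [TopologicalSpace E]
    (γ : ℂ → E) (D : Set ℂ) (S : Set E) : Prop :=
  Set.InjOn γ D ∧ γ '' D = S ∧ ContinuousOn γ D ∧
    ∃ σ : E → ℂ, ContinuousOn σ S ∧ ∀ z ∈ D, σ (γ z) = z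

/-- A regular point of a curve `X ⊂ ℂᵏ`: some neighborhood of `p` in `X` is the
homeomorphic image of an injective holomorphic map with nowhere-vanishing derivative. -/
def IsRegularPoint {k : ℕ} (X : Set (EuclideanSpace ℂ (Fin k)))
    (p : EuclideanSpace ℂ (Fin k)) : Prop :=
  ∃ (U : Set (EuclideanSpace ℂ (Fin k))) (D : Set ℂ) (γ : ℂ → EuclideanSpace ℂ (Fin k)),
    IsOpen U ∧ p ∈ U ∧ IsOpen D ∧ DifferentiableOn ℂ γ D ∧ Set.InjOn γ D ∧
    (∀ z ∈ D, deriv γ z ≠ 0) ∧ MapsHomeomorphicallyOnto γ D (X ∩ U)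

/-- The set of singular points of `X`. -/
def SingularSet {k : ℕ} (X : Set (EuclideanSpace ℂ (Fin k))) :
    Set (EuclideanSpace ℂ (Fin k)) :=
  {p ∈ X | ¬ IsRegularPoint X p}

/-- `B` is a (smooth) branch through `q` with tangent vector `v`. -/
def IsBranchAt (B : Set (EuclideanSpace ℂ (Fin 2))) (q v : EuclideanSpace ℂ (Fin 2)) : Prop :=
  ∃ (D : Set ℂ) (γ : ℂ → EuclideanSpace ℂ (Fin 2)) (z₀ : ℂ),
    IsOpen D ∧ z₀ ∈ D ∧ DifferentiableOn ℂ γ D ∧ Set.InjOn γ D ∧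
    (∀ z ∈ D, deriv γ z ≠ 0) ∧ MapsHomeomorphicallyOnto γ D B ∧
    γ z₀ = q ∧ deriv γ z₀ = v

/-- `q` is a node of the plane curve `Y`: near `q`, `Y` is the union of two smooth branches
meeting only at `q` with distinct tangent lines. -/
def IsNode (Y : Set (EuclideanSpace ℂ (Fin 2))) (q : EuclideanSpace ℂ (Fin 2)) : Prop :=
  q ∈ Y ∧ ∃ (U B₁ B₂ : Set (EuclideanSpace ℂ (Fin 2))) (v₁ v₂ : EuclideanSpace ℂ (Fin 2)),
    IsOpen U ∧ q ∈ U ∧ Y ∩ U = B₁ ∪ B₂ ∧ B₁ ∩ B₂ = {q} ∧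
    IsBranchAt B₁ q v₁ ∧ IsBranchAt B₂ q v₂ ∧ ∀ c : ℂ, v₂ ≠ c • v₁

/-- The set of points of `ℂ²` having more than one `π`-preimage in `X`. -/
def MultipleSet {n : ℕ} (π : EuclideanSpace ℂ (Fin n) →ₗ[ℂ] EuclideanSpace ℂ (Fin 2))
    (X : Set (EuclideanSpace ℂ (Fin n))) : Set (EuclideanSpace ℂ (Fin 2)) :=
  {q | ∃ x ∈ X, ∃ y ∈ X, x ≠ y ∧ π x = q ∧ π y = q}

/-- `π` is a generic plane projection for the algebraic curve `X ⊂ ℂⁿ`. -/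
def IsGenericPlaneProjection {n : ℕ}
    (π : EuclideanSpace ℂ (Fin n) →ₗ[ℂ] EuclideanSpace ℂ (Fin 2))
    (X : Set (EuclideanSpace ℂ (Fin n))) : Prop :=
  Function.Surjective π ∧
  (∀ K : Set (EuclideanSpace ℂ (Fin 2)), IsCompact K → IsCompact (X ∩ ⇑π ⁻¹' K)) ∧
  (MultipleSet π X).Finite ∧
  (∀ q ∈ MultipleSet π X, ∃ x y, x ≠ y ∧ {z ∈ X | π z = q} = {x, y} ∧
    IsRegularPoint X x ∧ IsRegularPoint X y) ∧
  (∀ q ∈ MultipleSet π X, IsNode (⇑π '' X) q) ∧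
  (∀ p ∈ X, π p ∉ MultipleSet π X →
    ∃ (U : Set (EuclideanSpace ℂ (Fin n))) (V : Set (EuclideanSpace ℂ (Fin 2))),
      IsOpen U ∧ IsOpen V ∧ p ∈ U ∧ π p ∈ V ∧
      IsBiLipschitzOn (⇑π) (X ∩ U) ((⇑π '' X) ∩ V))

/-- The complex projective plane `ℂP²`. -/
abbrev ProjPlane : Type := Projectivization ℂ (Fin 3 → ℂ)

instance : TopologicalSpace ProjPlane :=
  inferInstanceAs (TopologicalSpace (Quotient (projectivizationSetoid ℂ (Fin 3 → ℂ))))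

/-- The embedding `ℂ² → ℂP²`, `(x, y) ↦ (x : y : 1)`. -/
def toProj (p : EuclideanSpace ℂ (Fin 2)) : ProjPlane :=
  Projectivization.mk ℂ ![p 0, p 1, 1] (fun h => by simpa using congrFun h 2)

/-- The line at infinity in `ℂP²`. -/
def lineAtInfinity : Set ProjPlane := {P | P.rep 2 = 0}

/-- The projective closure of a plane curve `X ⊂ ℂ²`: the topological closure in `ℂP²`. -/
def projClosure (X : Set (EuclideanSpace ℂ (Fin 2))) : Set ProjPlane :=
  closure (toProj '' X)

/-- The germs `(A, p)` and `(B, q)` are (ambient) topologically equivalent. -/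
def GermTopEquiv {T : Type*} [TopologicalSpace T] (A : Set T) (p : T) (B : Set T) (q : T) :
    Prop :=
  ∃ (U V : Set T) (φ ψ : T → T),
    IsOpen U ∧ IsOpen V ∧ p ∈ U ∧ q ∈ V ∧
    ContinuousOn φ U ∧ ContinuousOn ψ V ∧ Set.MapsTo φ U V ∧ Set.MapsTo ψ V U ∧
    (∀ x ∈ U, ψ (φ x) = x) ∧ (∀ y ∈ V, φ (ψ y) = y) ∧
    φ p = q ∧ φ '' (A ∩ U) = B ∩ V

/-- The `i`-th standard affine chart of `ℂP²`. -/
def chart (i : Fin 3) (P : ProjPlane) : EuclideanSpace ℂ (Fin 2) :=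
  (EuclideanSpace.equiv (Fin 2) ℂ).symm fun j => P.rep (i.succAbove j) / P.rep i

/-- A regular point of a curve `C ⊂ ℂP²`: read in a standard affine chart, some neighborhood
of `p` in `C` is the homeomorphic image of an injective holomorphic map with
nowhere-vanishing derivative. -/
def IsRegularPointProj (C : Set ProjPlane) (p : ProjPlane) : Prop :=
  ∃ i : Fin 3, p.rep i ≠ 0 ∧
    ∃ W : Set ProjPlane, IsOpen W ∧ p ∈ W ∧ W ⊆ {P : ProjPlane | P.rep i ≠ 0} ∧
      ∃ (D : Set ℂ) (γ : ℂ → EuclideanSpace ℂ (Fin 2)),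
        IsOpen D ∧ DifferentiableOn ℂ γ D ∧ Set.InjOn γ D ∧ (∀ z ∈ D, deriv γ z ≠ 0) ∧
        MapsHomeomorphicallyOnto γ D (chart i '' (C ∩ W))

/-- The set of singular points of a curve `C ⊂ ℂP²`. -/
def SingularSetProj (C : Set ProjPlane) : Set ProjPlane :=
  {p ∈ C | ¬ IsRegularPointProj C p}

/-- `C` is an irreducible component of the algebraic curve `X`. -/
def IsIrreducibleComponent {k : ℕ} (C X : Set (EuclideanSpace ℂ (Fin k))) : Prop :=
  IsIrreducibleAlgebraicCurve C ∧ C ⊆ X ∧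
    ∀ C', IsIrreducibleAlgebraicCurve C' → C' ⊆ X → C ⊆ C' → C' = C

/-- The degree of an algebraic plane curve: the minimal degree of a nonzero polynomial
vanishing identically on it. -/
def curveDegree (X : Set (EuclideanSpace ℂ (Fin 2))) : ℕ :=
  sInf {d | ∃ P : MvPolynomial (Fin 2) ℂ, P ≠ 0 ∧ P.totalDegree = d ∧
    ∀ x ∈ X, MvPolynomial.eval (fun i => x i) P = 0}

/-!
Let `γ₁`, `γ₂` parametrize the two branches of a node `p`, with `γᵢ 0 = p`. The map
`Φ (s, t) = γ₁ s + γ₂ t - p` sends the coordinate axes of `ℂ × ℂ` onto the curve near `p`, and its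
derivative `(s, t) ↦ s • γ₁' 0 + t • γ₂' 0` is invertible because the tangent lines are distinct,
so by the inverse function theorem `Φ` is bi-Lipschitz near `0`. Hence the germ at every node is
bi-Lipschitz equivalent to the germ at `0` of the coordinate axes, and composing one such chart
with the inverse of the other gives the equivalence.
-/

open Filter Topology NNReal

theorem mapsTo_inter_inter_of_leftInvOn {α β : Type*} {X U O : Set α} {Y V O' : Set β}
    {f : α → β} {g : β → α} (hf : MapsTo f (X ∩ U) Y) (hgf : LeftInvOn g f (X ∩ U))
    (hO : f ⁻¹' V ∩ (X ∩ U) = O ∩ (X ∩ U)) (hO' : g ⁻¹' U ∩ (Y ∩ V) = O' ∩ (Y ∩ V)) :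
    MapsTo f (X ∩ (U ∩ O)) (Y ∩ (V ∩ O')) := by
  rintro x ⟨hxX, hxU, hxO⟩
  have hxV : f x ∈ V := ((Set.ext_iff.1 hO x).2 ⟨hxO, hxX, hxU⟩).1
  have hgfx : g (f x) ∈ U := by rw [hgf ⟨hxX, hxU⟩]; exact hxU
  exact ⟨hf ⟨hxX, hxU⟩, hxV, ((Set.ext_iff.1 hO' (f x)).1 ⟨hgfx, hf ⟨hxX, hxU⟩, hxV⟩).1⟩

section BiLipschitz

variable {E F : Type*} [NormedAddCommGroup E] [NormedAddCommGroup F]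

theorem isBiLipschitzOn_of_leftInvOn {f : E → F} {g : F → E} {S : Set E} {T : Set F}
    {K L : ℝ≥0} (hbij : BijOn f S T) (hgf : LeftInvOn g f S)
    (hf : LipschitzOnWith K f S) (hg : LipschitzOnWith L g T) : IsBiLipschitzOn f S T := by
  refine ⟨hbij, max 1 (max K L), le_max_left _ _, fun x hx x' hx' => ⟨?_, ?_⟩⟩
  · have hL : ‖x - x'‖ ≤ L * ‖f x - f x'‖ := by
      simpa only [hgf hx, hgf hx', dist_eq_norm] using
        hg.dist_le_mul (f x) (hbij.mapsTo hx) (f x') (hbij.mapsTo hx')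
    rw [inv_mul_le_iff₀ (by positivity)]
    exact hL.trans (by gcongr; exact (le_max_right _ _).trans (le_max_right _ _))
  · calc ‖f x - f x'‖ ≤ K * ‖x - x'‖ := by
          simpa only [dist_eq_norm] using hf.dist_le_mul x hx x' hx'
      _ ≤ max 1 (max K L) * ‖x - x'‖ := by
        gcongr; exact (le_max_left _ _).trans (le_max_right _ _)

theorem germBiLipschitzEquiv_of_leftInvOn {X : Set E} {Y : Set F} {p : E} {q : F}
    {f : E → F} {g : F → E} {U : Set E} {V : Set F} {K L : ℝ≥0}
    (hU : IsOpen U) (hV : IsOpen V) (hpX : p ∈ X) (hpU : p ∈ U) (hqV : q ∈ V) (hfp : f p = q)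
    (hf : MapsTo f (X ∩ U) Y) (hg : MapsTo g (Y ∩ V) X)
    (hgf : LeftInvOn g f (X ∩ U)) (hfg : LeftInvOn f g (Y ∩ V))
    (hfL : LipschitzOnWith K f (X ∩ U)) (hgL : LipschitzOnWith L g (Y ∩ V)) :
    GermBiLipschitzEquiv X p Y q := by
  obtain ⟨O, hO, hfO⟩ := continuousOn_iff'.1 hfL.continuousOn V hV
  obtain ⟨O', hO', hgO'⟩ := continuousOn_iff'.1 hgL.continuousOn U hU
  have hmapsf := mapsTo_inter_inter_of_leftInvOn hf hgf hfO hgO'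
  have hmapsg := mapsTo_inter_inter_of_leftInvOn hg hfg hgO' hfO
  have hpO : p ∈ O := ((Set.ext_iff.1 hfO p).1 ⟨show f p ∈ V from hfp ▸ hqV, hpX, hpU⟩).1
  have hsubX : X ∩ (U ∩ O) ⊆ X ∩ U := inter_subset_inter_right _ inter_subset_left
  have hsubY : Y ∩ (V ∩ O') ⊆ Y ∩ V := inter_subset_inter_right _ inter_subset_left
  refine ⟨U ∩ O, V ∩ O', hU.inter hO, hV.inter hO', ⟨hpU, hpO⟩,
    hfp ▸ (hmapsf ⟨hpX, hpU, hpO⟩).2, f, ?_, hfp⟩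
  exact isBiLipschitzOn_of_leftInvOn (InvOn.bijOn ⟨hgf.mono hsubX, hfg.mono hsubY⟩ hmapsf hmapsg)
    (hgf.mono hsubX) (hfL.mono hsubX) (hgL.mono hsubY)

end BiLipschitz

theorem HasStrictFDerivAt.exists_lipschitzOnWith_antilipschitzWith {𝕜 E F : Type*}
    [NontriviallyNormedField 𝕜] [NormedAddCommGroup E] [NormedSpace 𝕜 E]
    [NormedAddCommGroup F] [NormedSpace 𝕜 F] {f : E → F} {f' : E ≃L[𝕜] F} {a : E}
    (hf : HasStrictFDerivAt f (f' : E →L[𝕜] F) a) :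
    ∃ s ∈ 𝓝 a, ∃ K K' : ℝ≥0, LipschitzOnWith K f s ∧ AntilipschitzWith K' (s.domRestrict f) := by
  obtain ⟨s, has, hs, happrox⟩ := hf.approximates_deriv_on_open_nhds
  refine ⟨s, hs.mem_nhds has, _, _, lipschitzOnWith_iff_restrict.2 happrox.lipschitz,
    happrox.antilipschitz ?_⟩
  exact f'.subsingleton_or_nnnorm_symm_pos.imp id fun h => NNReal.half_lt_self (inv_pos.2 h).ne'

local notation "ℂ²" => EuclideanSpace ℂ (Fin 2)

structure BranchParam {E : Type*} [NormedAddCommGroup E] [NormedSpace ℂ E]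
    (B : Set E) (c v : E) where
  γ : ℂ → E
  σ : E → ℂ
  hasStrictDerivAt : HasStrictDerivAt γ v 0
  γ_zero : γ 0 = c
  leftInvOn : LeftInvOn γ σ B
  eventually_mem_σ_γ : ∀ᶠ u in 𝓝 0, γ u ∈ B ∧ σ (γ u) = u
  continuousWithinAt_σ : ContinuousWithinAt σ B c

theorem IsBranchAt.ne_zero {B : Set ℂ²} {c v : ℂ²} (h : IsBranchAt B c v) : v ≠ 0 := by
  obtain ⟨D, γ, z₀, -, hz₀, -, -, hderiv, -, -, rfl⟩ := h
  exact hderiv z₀ hz₀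

theorem IsBranchAt.nonempty_branchParam {B : Set ℂ²} {c v : ℂ²} (h : IsBranchAt B c v) :
    Nonempty (BranchParam B c v) := by
  obtain ⟨D, γ, z₀, hD, hz₀, hdiff, -, -, ⟨-, rfl, -, σ, hσ, hσγ⟩, rfl, rfl⟩ := h
  have hγ : HasStrictDerivAt γ (deriv γ z₀) (z₀ + 0) := by
    rw [add_zero]; exact (hdiff.analyticAt (hD.mem_nhds hz₀)).hasStrictDerivAt
  have hD0 : ∀ᶠ u in 𝓝 (0 : ℂ), z₀ + u ∈ D :=
    (continuous_const_add z₀).continuousAt.preimage_mem_nhds (by simpa using hD.mem_nhds hz₀)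
  refine ⟨⟨fun u => γ (z₀ + u), fun x => σ x - z₀, ?_, by simp, ?_, ?_, ?_⟩⟩
  · simpa [Function.comp_def] using
      HasStrictDerivAt.scomp (h := fun u => z₀ + u) 0 hγ ((hasStrictDerivAt_id 0).const_add z₀)
  · rintro _ ⟨z, hz, rfl⟩
    simp [hσγ z hz]
  · filter_upwards [hD0] with u hu
    exact ⟨mem_image_of_mem γ hu, by simp [hσγ _ hu]⟩
  · exact (hσ _ (mem_image_of_mem γ hz₀)).sub continuousWithinAt_const

theorem exists_continuousLinearEquiv_coprod_toSpanSingleton {𝕜 V : Type*}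
    [NontriviallyNormedField 𝕜] [CompleteSpace 𝕜] [NormedAddCommGroup V] [NormedSpace 𝕜 V]
    [FiniteDimensional 𝕜 V] (hV : Module.finrank 𝕜 V = 2) {v₁ v₂ : V} (hv₁ : v₁ ≠ 0)
    (hv₂ : ∀ c : 𝕜, v₂ ≠ c • v₁) :
    ∃ e : (𝕜 × 𝕜) ≃L[𝕜] V,
      (e : (𝕜 × 𝕜) →L[𝕜] V) = (ContinuousLinearMap.toSpanSingleton 𝕜 v₁).coprod
        (ContinuousLinearMap.toSpanSingleton 𝕜 v₂) := by
  set L := (ContinuousLinearMap.toSpanSingleton 𝕜 v₁).coprod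
    (ContinuousLinearMap.toSpanSingleton 𝕜 v₂)
  have hL : Function.Injective L := by
    refine (injective_iff_map_eq_zero L).2 fun ⟨a, b⟩ hab => ?_
    simp only [L, ContinuousLinearMap.coprod_apply,
      ContinuousLinearMap.toSpanSingleton_apply] at hab
    by_cases hb : b = 0
    · subst hb
      simpa [hv₁] using hab
    · refine absurd ?_ (hv₂ (-(b⁻¹ * a)))
      rw [← eq_neg_iff_add_eq_zero] at hab
      rw [neg_smul, mul_smul, hab, smul_neg, neg_neg, smul_smul, inv_mul_cancel₀ hb, one_smul]
  refine ⟨(LinearMap.linearEquivOfInjective (L : 𝕜 × 𝕜 →ₗ[𝕜] V) hL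
    (by simp [hV])).toContinuousLinearEquiv, ?_⟩
  ext <;> rfl

def coordAxes : Set (ℂ × ℂ) := {z | z.1 = 0 ∨ z.2 = 0}

namespace BranchParam

variable {E : Type*} [NormedAddCommGroup E] [NormedSpace ℂ E]

theorem σ_self {B : Set E} {c v : E} (b : BranchParam B c v) : b.σ c = 0 := by
  simpa [b.γ_zero] using b.eventually_mem_σ_γ.self_of_nhds.2

theorem self_mem {B : Set E} {c v : E} (b : BranchParam B c v) : c ∈ B := by
  simpa [b.γ_zero] using b.eventually_mem_σ_γ.self_of_nhds.1

variable {A₁ A₂ : Set E} {p v₁ v₂ : E} (b₁ : BranchParam A₁ p v₁) (b₂ : BranchParam A₂ p v₂)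

def nodeMap (z : ℂ × ℂ) : E := b₁.γ z.1 + b₂.γ z.2 - p

open Classical in
def nodeCoord (x : E) : ℂ × ℂ := if x ∈ A₁ then (b₁.σ x, 0) else (0, b₂.σ x)

theorem nodeMap_zero : b₁.nodeMap b₂ 0 = p := by
  simp [nodeMap, b₁.γ_zero, b₂.γ_zero]

theorem nodeCoord_self : b₁.nodeCoord b₂ p = 0 := by
  simp [nodeCoord, b₁.self_mem, b₁.σ_self]

theorem nodeCoord_mem_coordAxes (x : E) : b₁.nodeCoord b₂ x ∈ coordAxes := by
  unfold nodeCoord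
  split_ifs <;> simp [coordAxes]

theorem leftInvOn_nodeCoord : LeftInvOn (b₁.nodeMap b₂) (b₁.nodeCoord b₂) (A₁ ∪ A₂) := by
  intro x hx
  by_cases hx₁ : x ∈ A₁
  · simp [nodeMap, nodeCoord, hx₁, b₁.leftInvOn hx₁, b₂.γ_zero]
  · simp [nodeMap, nodeCoord, hx₁, b₂.leftInvOn (hx.resolve_left hx₁), b₁.γ_zero]

variable {b₁ b₂}

theorem nodeCoord_of_mem_right (hA : A₁ ∩ A₂ = {p}) {x : E} (hx : x ∈ A₂) :
    b₁.nodeCoord b₂ x = (0, b₂.σ x) := by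
  by_cases hx₁ : x ∈ A₁
  · obtain rfl : x = p := hA.subset ⟨hx₁, hx⟩
    rw [nodeCoord_self, b₂.σ_self]; rfl
  · simp [nodeCoord, hx₁]

theorem continuousWithinAt_nodeCoord (hA : A₁ ∩ A₂ = {p}) :
    ContinuousWithinAt (b₁.nodeCoord b₂) (A₁ ∪ A₂) p := by
  refine ContinuousWithinAt.union ?_ ?_
  · have h₁ : ContinuousWithinAt (fun x => (b₁.σ x, (0 : ℂ))) A₁ p :=
      b₁.continuousWithinAt_σ.prodMk continuousWithinAt_const
    exact h₁.congr (fun x hx => by simp [nodeCoord, hx]) (by simp [nodeCoord, b₁.self_mem])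
  · have h₂ : ContinuousWithinAt (fun x => ((0 : ℂ), b₂.σ x)) A₂ p :=
      continuousWithinAt_const.prodMk b₂.continuousWithinAt_σ
    exact h₂.congr
      (fun x hx => nodeCoord_of_mem_right hA hx) (nodeCoord_of_mem_right hA b₂.self_mem)

theorem eventually_nodeCoord_nodeMap (hA : A₁ ∩ A₂ = {p}) :
    ∀ᶠ z in 𝓝 (0 : ℂ × ℂ), z ∈ coordAxes →
      b₁.nodeMap b₂ z ∈ A₁ ∪ A₂ ∧ b₁.nodeCoord b₂ (b₁.nodeMap b₂ z) = z := by
  filter_upwards [continuous_fst.continuousAt.preimage_mem_nhds b₁.eventually_mem_σ_γ,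
    continuous_snd.continuousAt.preimage_mem_nhds b₂.eventually_mem_σ_γ]
    with ⟨a, b⟩ ⟨ha, hσa⟩ ⟨hb, hσb⟩ hab
  rcases hab with rfl | rfl
  · have h : b₁.nodeMap b₂ (0, b) = b₂.γ b := by simp [nodeMap, b₁.γ_zero]
    rw [h, nodeCoord_of_mem_right hA hb, hσb]
    exact ⟨Or.inr hb, rfl⟩
  · have h : b₁.nodeMap b₂ (a, 0) = b₁.γ a := by simp [nodeMap, b₂.γ_zero]
    rw [h]
    exact ⟨Or.inl ha, by simp [nodeCoord, ha, hσa]⟩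

theorem hasStrictFDerivAt_nodeMap :
    HasStrictFDerivAt (b₁.nodeMap b₂)
      ((ContinuousLinearMap.toSpanSingleton ℂ v₁).coprod
        (ContinuousLinearMap.toSpanSingleton ℂ v₂)) 0 := by
  have h₁ := HasStrictFDerivAt.comp (f := Prod.fst) (0 : ℂ × ℂ)
    b₁.hasStrictDerivAt.hasStrictFDerivAt hasStrictFDerivAt_fst
  have h₂ := HasStrictFDerivAt.comp (f := Prod.snd) (0 : ℂ × ℂ)
    b₂.hasStrictDerivAt.hasStrictFDerivAt hasStrictFDerivAt_snd
  exact (h₁.add h₂).sub_const p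

end BranchParam

/-- `Φ` is bi-Lipschitz on the neighbourhood `s` of `0` and identifies the coordinate axes in `s`
with part of `X`; `Ψ` inverts it along `X ∩ U`. -/
structure NodeChart {E : Type*} [NormedAddCommGroup E] (X : Set E) (p : E) where
  Φ : ℂ × ℂ → E
  Ψ : E → ℂ × ℂ
  s : Set (ℂ × ℂ)
  U : Set E
  s_mem_nhds : s ∈ 𝓝 0
  isOpen_U : IsOpen U
  mem_U : p ∈ U
  Φ_zero : Φ 0 = p
  Ψ_self : Ψ p = 0
  mapsTo_Φ : MapsTo Φ (coordAxes ∩ s) X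
  leftInvOn_axes : LeftInvOn Ψ Φ (coordAxes ∩ s)
  mapsTo_Ψ : MapsTo Ψ (X ∩ U) coordAxes
  leftInvOn_curve : LeftInvOn Φ Ψ (X ∩ U)
  lipschitzConst : ℝ≥0
  antilipschitzConst : ℝ≥0
  lipschitzOnWith_Φ : LipschitzOnWith lipschitzConst Φ s
  antilipschitzWith_Φ : AntilipschitzWith antilipschitzConst (s.domRestrict Φ)
  continuousWithinAt_Ψ : ContinuousWithinAt Ψ X p

namespace NodeChart

variable {E F : Type*} [NormedAddCommGroup E] [NormedAddCommGroup F] {X : Set E} {p : E}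
  {Y : Set F} {q : F}

theorem self_mem (c : NodeChart X p) : p ∈ X :=
  c.Φ_zero ▸ c.mapsTo_Φ ⟨Or.inl rfl, mem_of_mem_nhds c.s_mem_nhds⟩

theorem exists_lipschitzOnWith_Ψ (c : NodeChart X p) {t : Set (ℂ × ℂ)} (ht : t ∈ 𝓝 0) :
    ∃ V, IsOpen V ∧ p ∈ V ∧ MapsTo c.Ψ (X ∩ V) (coordAxes ∩ t) ∧
      LeftInvOn c.Φ c.Ψ (X ∩ V) ∧ LipschitzOnWith c.antilipschitzConst c.Ψ (X ∩ V) := by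
  have hst : c.Ψ ⁻¹' (c.s ∩ t) ∈ 𝓝[X] p :=
    c.continuousWithinAt_Ψ.preimage_mem_nhdsWithin (c.Ψ_self ▸ inter_mem c.s_mem_nhds ht)
  obtain ⟨O, hO, hpO, hOX⟩ := mem_nhdsWithin.1 hst
  have hsub : X ∩ (O ∩ c.U) ⊆ X ∩ c.U := inter_subset_inter_right _ inter_subset_right
  have hΨs : MapsTo c.Ψ (X ∩ (O ∩ c.U)) (c.s ∩ t) := fun x hx => hOX ⟨hx.2.1, hx.1⟩
  refine ⟨O ∩ c.U, hO.inter c.isOpen_U, ⟨hpO, c.mem_U⟩,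
    fun x hx => ⟨c.mapsTo_Ψ (hsub hx), (hΨs hx).2⟩, c.leftInvOn_curve.mono hsub,
    LipschitzOnWith.of_dist_le_mul fun x hx y hy => ?_⟩
  have := c.antilipschitzWith_Φ.le_mul_dist ⟨_, (hΨs hx).1⟩ ⟨_, (hΨs hy).1⟩
  simpa [Subtype.dist_eq, c.leftInvOn_curve (hsub hx), c.leftInvOn_curve (hsub hy)] using this

theorem exists_lipschitzOnWith_Φ_comp_Ψ (cX : NodeChart X p) (cY : NodeChart Y q) :
    ∃ V, IsOpen V ∧ p ∈ V ∧ MapsTo (cY.Φ ∘ cX.Ψ) (X ∩ V) Y ∧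
      LeftInvOn (cX.Φ ∘ cY.Ψ) (cY.Φ ∘ cX.Ψ) (X ∩ V) ∧
      LipschitzOnWith (cY.lipschitzConst * cX.antilipschitzConst) (cY.Φ ∘ cX.Ψ) (X ∩ V) := by
  obtain ⟨V, hV, hpV, hΨ, hΦΨ, hΨL⟩ := cX.exists_lipschitzOnWith_Ψ cY.s_mem_nhds
  refine ⟨V, hV, hpV, cY.mapsTo_Φ.comp hΨ, fun x hx => ?_,
    cY.lipschitzOnWith_Φ.comp hΨL fun x hx => (hΨ hx).2⟩
  simp only [Function.comp_apply, cY.leftInvOn_axes (hΨ hx), hΦΨ hx]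

theorem germBiLipschitzEquiv (cX : NodeChart X p) (cY : NodeChart Y q) :
    GermBiLipschitzEquiv X p Y q := by
  obtain ⟨U, hU, hpU, hf, hgf, hfL⟩ := cX.exists_lipschitzOnWith_Φ_comp_Ψ cY
  obtain ⟨V, hV, hqV, hg, hfg, hgL⟩ := cY.exists_lipschitzOnWith_Φ_comp_Ψ cX
  exact germBiLipschitzEquiv_of_leftInvOn hU hV cX.self_mem hpU hqV
    (by simp [cX.Ψ_self, cY.Φ_zero]) hf hg hgf hfg hfL hgL

end NodeChart

theorem IsNode.nonempty_nodeChart {X : Set ℂ²} {p : ℂ²} (h : IsNode X p) :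
    Nonempty (NodeChart X p) := by
  obtain ⟨-, U, A₁, A₂, v₁, v₂, hU, hpU, hXU, hA, hb₁, hb₂, hv⟩ := h
  obtain ⟨b₁⟩ := hb₁.nonempty_branchParam
  obtain ⟨b₂⟩ := hb₂.nonempty_branchParam
  obtain ⟨e, he⟩ := exists_continuousLinearEquiv_coprod_toSpanSingleton
    finrank_euclideanSpace_fin hb₁.ne_zero hv
  obtain ⟨s, hs, K, K', hK, hK'⟩ :=
    (he ▸ b₁.hasStrictFDerivAt_nodeMap : HasStrictFDerivAt (b₁.nodeMap b₂)
      (e : (ℂ × ℂ) →L[ℂ] ℂ²) 0).exists_lipschitzOnWith_antilipschitzWith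
  have hAX : A₁ ∪ A₂ ⊆ X := hXU ▸ inter_subset_left
  exact ⟨{
    Φ := b₁.nodeMap b₂
    Ψ := b₁.nodeCoord b₂
    s := s ∩ {z | z ∈ coordAxes →
      b₁.nodeMap b₂ z ∈ A₁ ∪ A₂ ∧ b₁.nodeCoord b₂ (b₁.nodeMap b₂ z) = z}
    U := U
    s_mem_nhds := inter_mem hs (BranchParam.eventually_nodeCoord_nodeMap hA)
    isOpen_U := hU
    mem_U := hpU
    Φ_zero := b₁.nodeMap_zero b₂
    Ψ_self := b₁.nodeCoord_self b₂
    mapsTo_Φ := fun z hz => hAX (hz.2.2 hz.1).1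
    leftInvOn_axes := fun z hz => (hz.2.2 hz.1).2
    mapsTo_Ψ := fun x _ => b₁.nodeCoord_mem_coordAxes b₂ x
    leftInvOn_curve := hXU ▸ b₁.leftInvOn_nodeCoord b₂
    lipschitzConst := K
    antilipschitzConst := K'
    lipschitzOnWith_Φ := hK.mono inter_subset_left
    antilipschitzWith_Φ :=
      AntilipschitzWith.of_le_mul_dist fun z z' => hK'.le_mul_dist ⟨z, z.2.1⟩ ⟨z', z'.2.1⟩
    continuousWithinAt_Ψ := (continuousWithinAt_inter (hU.mem_nhds hpU)).1
      (hXU ▸ BranchParam.continuousWithinAt_nodeCoord hA) }⟩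

theorem stmt_8_general (X Y : Set (EuclideanSpace ℂ (Fin 2)))
    (p q : EuclideanSpace ℂ (Fin 2)) (hp : IsNode X p) (hq : IsNode Y q) :
    GermBiLipschitzEquiv X p Y q := by
  obtain ⟨cX⟩ := hp.nonempty_nodeChart
  obtain ⟨cY⟩ := hq.nonempty_nodeChart
  exact cX.germBiLipschitzEquiv cY

/-- any two nodes of algebraic plane curves have bi-Lipschitz equivalent
germs. -/
theorem stmt_8 (X Y : Set (EuclideanSpace ℂ (Fin 2)))
    (hX : IsAlgebraicCurve X) (hY : IsAlgebraicCurve Y)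
    (p q : EuclideanSpace ℂ (Fin 2)) (hp : IsNode X p) (hq : IsNode Y q) :
    GermBiLipschitzEquiv X p Y q :=
  stmt_8_general X Y p q hp hq

end
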